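/- Let $q$ be a prime power and $U$ a scheme over $\mathbb{F}_q$ which is isomorphic as a scheme to affine space $\mathbb{A}^n_{\mathbb{F}_q}$. Then $\#U(\mathbb{F}_q) = q^n$. -/

import Mathlib

/-!
A rational point of `U` is a section of `p`. Transporting along `e` and using that `Spec` is fully
faithful, sections of `Spec F[x₁, …, xₙ] → Spec F` are exactly the `F`-algebra maps
`F[x₁, …, xₙ] → F`, and these are determined freely by the images of the variables, i.e. by a
point of `Fⁿ`.
-/

open AlgebraicGeometry CategoryTheory

universe u

def CategoryTheory.Iso.homOverEquiv {C : Type*} [Category C] {X Y S T : C} (e : X ≅ Y)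
    (q : Y ⟶ S) (t : T ⟶ S) :
    {g : T ⟶ X // g ≫ e.hom ≫ q = t} ≃ {h : T ⟶ Y // h ≫ q = t} :=
  e.homToEquiv.subtypeEquiv fun g ↦ by simp [Iso.homToEquiv]

def CommRingCat.homUnderEquivAlgHom (R A S : Type u) [CommRing R] [CommRing A] [CommRing S]
    [Algebra R A] [Algebra R S] :
    {φ : CommRingCat.of A ⟶ CommRingCat.of S //
      CommRingCat.ofHom (algebraMap R A) ≫ φ = CommRingCat.ofHom (algebraMap R S)} ≃
      (A →ₐ[R] S) where
  toFun φ := { φ.1.hom with commutes' := fun r ↦ congr($(φ.2).hom r) }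
  invFun ψ := ⟨CommRingCat.ofHom ψ.toRingHom, by ext; simp⟩
  left_inv _ := rfl
  right_inv _ := rfl

noncomputable def AlgebraicGeometry.Spec.homOverEquivAlgHom (R A S : Type u) [CommRing R]
    [CommRing A] [CommRing S] [Algebra R A] [Algebra R S] :
    {h : Spec (.of S) ⟶ Spec (.of A) //
      h ≫ Spec.map (CommRingCat.ofHom (algebraMap R A)) =
        Spec.map (CommRingCat.ofHom (algebraMap R S))} ≃ (A →ₐ[R] S) :=
  (Spec.homEquiv.subtypeEquiv fun h ↦ by
    rw [← Spec.map_preimage h, ← Spec.map_comp, Spec.map_inj]; simp).trans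
    (CommRingCat.homUnderEquivAlgHom R A S)

noncomputable def MvPolynomial.algHomEquivFun (σ R S : Type*) [CommSemiring R] [CommSemiring S]
    [Algebra R S] : (MvPolynomial σ R →ₐ[R] S) ≃ (σ → S) where
  toFun ψ i := ψ (X i)
  invFun v := aeval v
  left_inv ψ := by ext; simp
  right_inv v := by ext; simp

theorem card_points_affine_space_general
    (q n : ℕ)
    (F : Type) [Field F] [Fintype F] (hF : Fintype.card F = q)
    (U : Scheme) (p : U ⟶ Spec (CommRingCat.of F))
    (e : U ≅ Spec (CommRingCat.of (MvPolynomial (Fin n) F)))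
    (he : e.hom ≫ Spec.map (CommRingCat.ofHom
        (algebraMap F (MvPolynomial (Fin n) F))) = p) :
    Nat.card {g : Spec (CommRingCat.of F) ⟶ U // g ≫ p = 𝟙 _} = q ^ n := by
  subst he
  have hid : Spec.map (CommRingCat.ofHom (algebraMap F F)) = 𝟙 _ := Spec.map_id _
  rw [← hid, Nat.card_congr ((e.homOverEquiv _ _).trans
      ((Spec.homOverEquivAlgHom F _ F).trans (MvPolynomial.algHomEquivFun _ F F))),
    Nat.card_fun, Nat.card_eq_fintype_card, hF, Nat.card_fin]

/-- if `U` is a scheme over `𝔽_q` isomorphic (over `𝔽_q`) to affine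
`n`-space `𝔸ⁿ_{𝔽_q} = Spec 𝔽_q[x₁,…,xₙ]`, then `#U(𝔽_q) = qⁿ`. -/
theorem card_points_affine_space
    (q n : ℕ) (hq : IsPrimePow q)
    (F : Type) [Field F] [Fintype F] (hF : Fintype.card F = q)
    (U : Scheme) (p : U ⟶ Spec (CommRingCat.of F))
    (e : U ≅ Spec (CommRingCat.of (MvPolynomial (Fin n) F)))
    (he : e.hom ≫ Spec.map (CommRingCat.ofHom
        (algebraMap F (MvPolynomial (Fin n) F))) = p) :
    Nat.card {g : Spec (CommRingCat.of F) ⟶ U // g ≫ p = 𝟙 _} = q ^ n :=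
  card_points_affine_space_general q n F hF U p e he
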